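/- Let r, m, s be positive integers with m > r. Then in LCTR, SG(((r+2)ᵐ, rˢ)) = 0 if r + m is even, and SG(((r+2)ᵐ, rˢ)) = 1 if r + m is odd, where ((r+2)ᵐ, rˢ) is the partition with m parts equal to r+2 followed by s parts equal to r. -/

import Mathlib

/-- Remove the left column of a Young diagram: subtract 1 from each part and
omit nonpositive values. -/
def leftCol (l : List ℕ) : List ℕ := (l.map (· - 1)).filter (0 < ·)

/-- Remove the top row of a Young diagram. -/
def topRow (l : List ℕ) : List ℕ := l.tail

/-- Minimum excluded value of a set of naturals. -/
noncomputable def mex (s : Set ℕ) : ℕ := sInf {n | n ∉ s}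

def wt (l : List ℕ) : ℕ := l.sum + l.length

lemma wt_leftCol_le (l : List ℕ) : wt (leftCol l) ≤ l.sum := by
  induction l with
  | nil => simp [leftCol, wt]
  | cons a t ih =>
    simp only [leftCol, wt] at ih ⊢
    rw [List.map_cons, List.filter_cons]
    by_cases h : 0 < a - 1
    · simp only [h, decide_true, if_true, List.sum_cons, List.length_cons]
      omega
    · simp only [h, decide_false, Bool.false_eq_true, if_false, List.sum_cons]
      omega

lemma wt_leftCol_lt (l : List ℕ) (h : l ≠ []) : wt (leftCol l) < wt l := by
  have h1 := wt_leftCol_le l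
  have h2 : 0 < l.length := List.length_pos_iff.mpr h
  unfold wt at *
  omega

lemma wt_topRow_lt (l : List ℕ) (h : l ≠ []) : wt (topRow l) < wt l := by
  cases l with
  | nil => exact absurd rfl h
  | cons a t => simp [topRow, wt]; omega

/-- The Sprague–Grundy value of a position in the LCTR game. -/
noncomputable def SG (l : List ℕ) : ℕ :=
  if h : l = [] then 0
  else mex {SG (leftCol l), SG (topRow l)}
termination_by wt l
decreasing_by
  · exact wt_leftCol_lt l h
  · exact wt_topRow_lt l h

/-- A partition: a non-increasing list of positive integers. -/
def IsPartition (l : List ℕ) : Prop := l.Pairwise (· ≥ ·) ∧ ∀ x ∈ l, 0 < x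

/-- The conjugate partition: the `j`-th part (for `1 ≤ j ≤ l₁`) is the number
of parts of `l` that are at least `j`. -/
def conj (l : List ℕ) : List ℕ :=
  (List.range (l.headD 0)).map (fun j => l.countP (fun x => decide (j < x)))

/-!
Write `gapTwo b m s = ((b+2)ᵐ, bˢ)`. For `b ≥ 2` removing the left column gives `gapTwo (b-1) m s`
and removing the top row gives `gapTwo b (m-1) s`, so by induction on `b` and then on `m` both
options have value `(b + m + 1) % 2` and `gapTwo b m s` itself has value `(b + m) % 2`.
At the boundary `m = b - 1` the top-row option `gapTwo b (b-2) s` leaves the family; it suffices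
that its value is not `1`, and it is not, because its left-column option `gapTwo (b-1) (b-2) s`
has value `1`. For `b = 1` the left-column option is the column `2ᵐ`, and for `m = 1` the
top-row option is the column `1ˢ`; the values of columns are computed directly.
-/

lemma mex_pair (a b : ℕ) :
    mex {a, b} = if a ≠ 0 ∧ b ≠ 0 then 0 else if a ≠ 1 ∧ b ≠ 1 then 1 else 2 := by
  have mex_eq : ∀ n, n ∉ ({a, b} : Set ℕ) → (∀ k < n, k ∈ ({a, b} : Set ℕ)) →
      mex {a, b} = n := fun n hn hlt =>
    le_antisymm (Nat.sInf_le hn) (not_lt.mp fun h =>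
      Nat.sInf_mem (s := {k | k ∉ ({a, b} : Set ℕ)}) ⟨n, hn⟩ (hlt _ h))
  split_ifs with h0
  · exact mex_eq 0 (by simp [h0.1.symm, h0.2.symm]) (by omega)
  · exact mex_eq 1 (by simp; omega) (fun k hk => by interval_cases k; simp; omega)
  · exact mex_eq 2 (by simp; omega) (fun k hk => by interval_cases k <;> simp <;> omega)

lemma SG_nil : SG [] = 0 := by
  rw [SG, dif_pos rfl]

lemma SG_of_ne_nil {l : List ℕ} (hl : l ≠ []) :
    SG l = mex {SG (leftCol l), SG (topRow l)} := by
  rw [SG, dif_neg hl]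

lemma SG_ne_SG_leftCol {l : List ℕ} (hl : l ≠ []) : SG l ≠ SG (leftCol l) := by
  rw [SG_of_ne_nil hl, mex_pair]
  split_ifs <;> omega

lemma leftCol_append (l₁ l₂ : List ℕ) : leftCol (l₁ ++ l₂) = leftCol l₁ ++ leftCol l₂ := by
  simp [leftCol]

lemma leftCol_replicate_one (m : ℕ) : leftCol (List.replicate m 1) = [] := by
  simp [leftCol]

lemma leftCol_replicate_of_one_lt {a : ℕ} (ha : 1 < a) (m : ℕ) :
    leftCol (List.replicate m a) = List.replicate m (a - 1) := by
  simp [leftCol, show 0 < a - 1 by omega]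

lemma topRow_replicate_succ_append (m a : ℕ) (l : List ℕ) :
    topRow (List.replicate (m + 1) a ++ l) = List.replicate m a ++ l := rfl

lemma SG_replicate_one {s : ℕ} (hs : 0 < s) : SG (List.replicate s 1) = 2 - s % 2 := by
  induction s, hs using Nat.le_induction with
  | base =>
    rw [SG_of_ne_nil (by simp), leftCol_replicate_one, SG_nil,
      show topRow (List.replicate 1 1) = [] from rfl, SG_nil, mex_pair]
    rfl
  | succ s hs ih =>
    rw [SG_of_ne_nil (by simp), leftCol_replicate_one, SG_nil,
      show topRow (List.replicate (s + 1) 1) = List.replicate s 1 from rfl, ih, mex_pair]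
    split_ifs <;> omega

lemma SG_replicate_two (m : ℕ) : SG (List.replicate m 2) = m % 2 * 2 := by
  induction m with
  | zero => exact SG_nil
  | succ m ih =>
    rw [SG_of_ne_nil (by simp), leftCol_replicate_of_one_lt one_lt_two,
      show topRow (List.replicate (m + 1) 2) = List.replicate m 2 from rfl, ih,
      show 2 - 1 = 1 from rfl, SG_replicate_one m.succ_pos, mex_pair]
    split_ifs <;> omega

def gapTwo (b m s : ℕ) : List ℕ := List.replicate m (b + 2) ++ List.replicate s b

lemma gapTwo_succ_ne_nil (b m s : ℕ) : gapTwo b (m + 1) s ≠ [] := by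
  simp [gapTwo]

lemma topRow_gapTwo_succ (b m s : ℕ) : topRow (gapTwo b (m + 1) s) = gapTwo b m s :=
  topRow_replicate_succ_append _ _ _

lemma leftCol_gapTwo_one (m s : ℕ) : leftCol (gapTwo 1 m s) = List.replicate m 2 := by
  rw [gapTwo, leftCol_append, leftCol_replicate_of_one_lt (by norm_num),
    leftCol_replicate_one, List.append_nil]

lemma leftCol_gapTwo_succ {b : ℕ} (hb : 0 < b) (m s : ℕ) :
    leftCol (gapTwo (b + 1) m s) = gapTwo b m s := by
  rw [gapTwo, leftCol_append, leftCol_replicate_of_one_lt (by omega),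
    leftCol_replicate_of_one_lt (by omega)]
  rfl

lemma SG_gapTwo_one {s : ℕ} (hs : 0 < s) {m : ℕ} (hm : 0 < m) :
    SG (gapTwo 1 m s) = (1 + m) % 2 := by
  induction m, hm using Nat.le_induction with
  | base =>
    rw [SG_of_ne_nil (gapTwo_succ_ne_nil 1 0 s), leftCol_gapTwo_one, topRow_gapTwo_succ,
      SG_replicate_two, gapTwo, List.replicate_zero, List.nil_append, SG_replicate_one hs,
      mex_pair]
    split_ifs <;> omega
  | succ m _ ih =>
    rw [SG_of_ne_nil (gapTwo_succ_ne_nil 1 m s), leftCol_gapTwo_one, topRow_gapTwo_succ,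
      SG_replicate_two, ih, mex_pair]
    split_ifs <;> omega

lemma SG_gapTwo_boundary_ne_one {k s : ℕ}
    (ih : ∀ m, 0 < m → k + 1 ≤ m + 1 → SG (gapTwo (k + 1) m s) = (k + 1 + m) % 2) :
    SG (gapTwo (k + 2) k s) ≠ 1 := by
  rcases k with _ | j
  · simp [gapTwo, SG_replicate_two]
  · have hL : SG (leftCol (gapTwo (j + 3) (j + 1) s)) = 1 := by
      rw [leftCol_gapTwo_succ (by omega), ih (j + 1) j.succ_pos (by omega)]
      omega
    exact fun h => SG_ne_SG_leftCol (gapTwo_succ_ne_nil _ _ _) (h.trans hL.symm)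

lemma SG_gapTwo {b s : ℕ} (hb : 0 < b) (hs : 0 < s) :
    ∀ m, 0 < m → b ≤ m + 1 → SG (gapTwo b m s) = (b + m) % 2 := by
  induction b, hb using Nat.le_induction with
  | base => exact fun m hm _ => SG_gapTwo_one hs hm
  | succ b hb ih =>
    intro m _ hbm
    induction m, (show b ≤ m by omega) using Nat.le_induction with
    | base =>
      obtain ⟨k, rfl⟩ : ∃ k, b = k + 1 := ⟨b - 1, by omega⟩
      have hT : SG (gapTwo (k + 1 + 1) k s) ≠ 1 := SG_gapTwo_boundary_ne_one ih
      rw [SG_of_ne_nil (gapTwo_succ_ne_nil _ _ _), leftCol_gapTwo_succ hb,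
        ih (k + 1) k.succ_pos (by omega), topRow_gapTwo_succ, mex_pair]
      split_ifs <;> omega
    | succ m _ ihm =>
      rw [SG_of_ne_nil (gapTwo_succ_ne_nil _ _ _), leftCol_gapTwo_succ hb,
        ih (m + 1) m.succ_pos (by omega), topRow_gapTwo_succ,
        ihm (by omega) (by omega), mex_pair]
      split_ifs <;> omega

/-- For positive integers `r, m, s` with `m > r`, the partition
`((r+2)ᵐ, rˢ)` has Sprague–Grundy value 0 if `r + m` is even and 1 if `r + m`
is odd. -/
theorem SG_thick_gamma_two (r m s : ℕ) (hr : 0 < r) (hs : 0 < s) (hm : r < m) :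
    (Even (r + m) → SG (List.replicate m (r + 2) ++ List.replicate s r) = 0) ∧
    (Odd (r + m) → SG (List.replicate m (r + 2) ++ List.replicate s r) = 1) := by
  have h : SG (gapTwo r m s) = (r + m) % 2 := SG_gapTwo hr hs m (by omega) (by omega)
  exact ⟨fun he => h.trans (Nat.even_iff.mp he), fun ho => h.trans (Nat.odd_iff.mp ho)⟩
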